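/- Let P be a 3×3 row-stochastic matrix with stationary probability row vector μ, and let Π be a 3×K state-dependent probability matrix with columns φ_k and Λ_k = diag(φ_k). If two rows of Π are equal (as vectors), then the observed process is reversible: for every r ≥ 1, every sequence of observation symbols s_1, …, s_r and all positive integers n_2, …, n_r, μ·Λ_{s_1}·P^{n_2}·Λ_{s_2}·⋯·P^{n_r}·Λ_{s_r}·e = μ·Λ_{s_r}·P^{n_r}·Λ_{s_{r−1}}·⋯·P^{n_2}·Λ_{s_1}·e. -/

import Mathlib

open Matrix

/-- The matrix product `Λ_{s₀} · P^{n₀} · Λ_{s₁} · ⋯ · P^{n_{r−1}} · Λ_{s_r}`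
appearing in the finite-dimensional distributions of the observed process of a
discrete-time hidden Markov model with 1-step transition probability matrix `P`
and state-dependent probability matrix `E`. -/
def obsProdD (P : Matrix (Fin 3) (Fin 3) ℝ) {K : ℕ}
    (E : Matrix (Fin 3) (Fin K) ℝ) {r : ℕ} (s : Fin (r + 1) → Fin K)
    (n : Fin r → ℕ) : Matrix (Fin 3) (Fin 3) ℝ :=
  Matrix.diagonal (fun a => E a (s 0)) *
    (List.ofFn fun i : Fin r =>
      P ^ n i * Matrix.diagonal fun a => E a (s i.succ)).prod

/-! Let `m` be the state other than the two with equal rows of `Π` (`E` below), so every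
`Λ_k` is a combination of the identity and the coordinate projection `D = diag(e_m)`.
Read the forward product from the left, `u = μ Λ_{s₁} P^{n₂} ⋯`, and the reversed one from
the right, `y = ⋯ P^{n₂} Λ_{s₁} e`. The pairs `(u, y)` with `u e = μ y` and
`(u P^t)_m = μ_m (P^t y)_m` for all `t` form a subspace which contains `(μ, e)` (stationarity
and `P e = e`) and is stable under `(u, y) ↦ (u P^k, P^k y)` and `(u, y) ↦ (u D, D y)`;
hence it contains every pair arising from an observation sequence, and its first condition
is the reversibility identity. -/

section Powers

variable {ι R : Type*} [Fintype ι] [DecidableEq ι] [Semiring R]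
  {P : Matrix ι ι R} {v : ι → R}

theorem Matrix.pow_mulVec_eq_self (h : P *ᵥ v = v) (t : ℕ) : P ^ t *ᵥ v = v := by
  induction t with
  | zero => simp
  | succ t ih => rw [pow_succ, ← mulVec_mulVec, h, ih]

theorem Matrix.vecMul_pow_eq_self (h : v ᵥ* P = v) (t : ℕ) : v ᵥ* P ^ t = v := by
  induction t with
  | zero => simp
  | succ t ih => rw [pow_succ, ← vecMul_vecMul, ih, h]

end Powers

section ReversalPairs

variable {ι R : Type*} [Fintype ι] [DecidableEq ι] [CommRing R]
  (P : Matrix ι ι R) (μ : ι → R) (m : ι)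

def reversalPairs : Submodule R ((ι → R) × (ι → R)) where
  carrier := {p | p.1 ⬝ᵥ 1 = μ ⬝ᵥ p.2 ∧ ∀ t : ℕ, (p.1 ᵥ* P ^ t) m = μ m * (P ^ t *ᵥ p.2) m}
  add_mem' := by
    rintro ⟨u, y⟩ ⟨u', y'⟩ ⟨hsum, hm⟩ ⟨hsum', hm'⟩
    refine ⟨by simp [add_dotProduct, dotProduct_add, hsum, hsum'], fun t => ?_⟩
    simp [add_vecMul, mulVec_add, hm t, hm' t, mul_add]
  zero_mem' := by simp
  smul_mem' := by
    rintro c ⟨u, y⟩ ⟨hsum, hm⟩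
    refine ⟨by simp [smul_dotProduct, dotProduct_smul, hsum], fun t => ?_⟩
    simp [smul_vecMul, mulVec_smul, hm t, mul_left_comm]

variable {P μ m}

theorem stationary_one_mem_reversalPairs (hP : P *ᵥ 1 = 1) (hμ : μ ᵥ* P = μ) :
    (μ, 1) ∈ reversalPairs P μ m :=
  ⟨rfl, fun t => by simp [vecMul_pow_eq_self hμ, pow_mulVec_eq_self hP]⟩

theorem vecMul_pow_mulVec_mem_reversalPairs (hP : P *ᵥ 1 = 1) (hμ : μ ᵥ* P = μ)
    {u y : ι → R} (h : (u, y) ∈ reversalPairs P μ m) (k : ℕ) :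
    (u ᵥ* P ^ k, P ^ k *ᵥ y) ∈ reversalPairs P μ m := by
  obtain ⟨hsum, hm⟩ := h
  refine ⟨?_, fun t => ?_⟩
  · rw [← dotProduct_mulVec, pow_mulVec_eq_self hP, dotProduct_mulVec μ,
      vecMul_pow_eq_self hμ]
    exact hsum
  · rw [vecMul_vecMul, ← pow_add, hm, mulVec_mulVec, ← pow_add, add_comm]

theorem single_mem_reversalPairs {u y : ι → R} (h : (u, y) ∈ reversalPairs P μ m) :
    (Pi.single m (u m), Pi.single m (y m)) ∈ reversalPairs P μ m := by
  obtain ⟨hsum, hm⟩ := h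
  have hum : u m = μ m * y m := by simpa using hm 0
  refine ⟨by simp [hum], fun t => ?_⟩
  simp [hum, mul_assoc, mul_comm (y m)]

theorem diagonal_mem_reversalPairs {d : ι → R} {c : R} (hd : ∀ a ≠ m, d a = c)
    {u y : ι → R} (h : (u, y) ∈ reversalPairs P μ m) :
    (u ᵥ* diagonal d, diagonal d *ᵥ y) ∈ reversalPairs P μ m := by
  have hsplit : (u ᵥ* diagonal d, diagonal d *ᵥ y) =
      c • (u, y) + (d m - c) • (Pi.single m (u m), Pi.single m (y m)) := by
    ext a <;> by_cases ha : a = m <;> simp [vecMul_diagonal, mulVec_diagonal, ha, hd a] <;> ring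
  rw [hsplit]
  exact add_mem (Submodule.smul_mem _ _ h)
    (Submodule.smul_mem _ _ (single_mem_reversalPairs h))

end ReversalPairs

section ObservedProduct

variable (P : Matrix (Fin 3) (Fin 3) ℝ) {K : ℕ} (E : Matrix (Fin 3) (Fin K) ℝ)

theorem obsProdD_fin_one (s : Fin 1 → Fin K) (n : Fin 0 → ℕ) :
    obsProdD P E s n = diagonal fun a => E a (s 0) := by
  simp [obsProdD]

theorem obsProdD_succ {r : ℕ} (s : Fin (r + 2) → Fin K) (n : Fin (r + 1) → ℕ) :
    obsProdD P E s n = obsProdD P E (s ∘ Fin.castSucc) (n ∘ Fin.castSucc) *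
      (P ^ n (Fin.last r) * diagonal fun a => E a (s (Fin.last (r + 1)))) := by
  rw [obsProdD, obsProdD, List.ofFn_succ', List.prod_concat, ← mul_assoc]
  simp only [Function.comp_apply, Fin.castSucc_zero, Fin.succ_castSucc, Fin.succ_last]

theorem obsProdD_rev_succ {r : ℕ} (s : Fin (r + 2) → Fin K) (n : Fin (r + 1) → ℕ) :
    obsProdD P E (s ∘ Fin.rev) (n ∘ Fin.rev) =
      (diagonal fun a => E a (s (Fin.last (r + 1)))) *
        (P ^ n (Fin.last r) *
          obsProdD P E ((s ∘ Fin.castSucc) ∘ Fin.rev) ((n ∘ Fin.castSucc) ∘ Fin.rev)) := by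
  rw [obsProdD, obsProdD, List.ofFn_succ, List.prod_cons]
  simp only [Function.comp_apply, Fin.rev_succ, Fin.rev_zero]
  simp [mul_assoc]

theorem obsProdD_mem_reversalPairs {μ : Fin 3 → ℝ} (hP : P *ᵥ 1 = 1) (hμ : μ ᵥ* P = μ)
    {m : Fin 3} {g : Fin K → ℝ} (hE : ∀ a ≠ m, E a = g) :
    ∀ (r : ℕ) (s : Fin (r + 1) → Fin K) (n : Fin r → ℕ),
      (μ ᵥ* obsProdD P E s n, obsProdD P E (s ∘ Fin.rev) (n ∘ Fin.rev) *ᵥ 1) ∈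
        reversalPairs P μ m := by
  have hdiag (k : Fin K) : ∀ a ≠ m, E a k = g k := fun a ha => congrFun (hE a ha) k
  intro r
  induction r with
  | zero =>
    intro s n
    have hs : s ∘ Fin.rev = s :=
      funext fun i => congrArg s (Subsingleton.elim (α := Fin 1) _ _)
    rw [hs, obsProdD_fin_one, obsProdD_fin_one]
    exact diagonal_mem_reversalPairs (hdiag _) (stationary_one_mem_reversalPairs hP hμ)
  | succ r ih =>
    intro s n
    rw [obsProdD_succ, obsProdD_rev_succ, ← vecMul_vecMul, ← vecMul_vecMul, ← mulVec_mulVec,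
      ← mulVec_mulVec]
    exact diagonal_mem_reversalPairs (hdiag _)
      (vecMul_pow_mulVec_mem_reversalPairs hP hμ (ih _ _) _)

end ObservedProduct

theorem Fin.exists_forall_ne_eq_or_eq {i j : Fin 3} (hij : i ≠ j) :
    ∃ m, ∀ a ≠ m, a = i ∨ a = j := by
  revert i j; decide

theorem observed_reversible_of_two_rows_eq_discrete_general
    (P : Matrix (Fin 3) (Fin 3) ℝ) (μ : Fin 3 → ℝ)
    {K : ℕ} (E : Matrix (Fin 3) (Fin K) ℝ)
    (hP1 : ∀ i : Fin 3, ∑ j, P i j = 1)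
    (hstat : μ ᵥ* P = μ)
    (hsing : ∃ i j : Fin 3, i ≠ j ∧ (fun k => E i k) = (fun k => E j k)) :
    ∀ (r : ℕ) (s : Fin (r + 1) → Fin K) (n : Fin r → ℕ), (∀ i, 1 ≤ n i) →
      (μ ᵥ* obsProdD P E s n) ⬝ᵥ (fun _ => (1 : ℝ)) =
        (μ ᵥ* obsProdD P E (s ∘ Fin.rev) (n ∘ Fin.rev)) ⬝ᵥ (fun _ => (1 : ℝ)) := by
  intro r s n _
  obtain ⟨i, j, hij, hrow⟩ := hsing
  obtain ⟨m, hm⟩ := Fin.exists_forall_ne_eq_or_eq hij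
  have hE : ∀ a ≠ m, E a = E i := fun a ha => by
    rcases hm a ha with rfl | rfl
    exacts [rfl, hrow.symm]
  have hP : P *ᵥ 1 = 1 := funext fun a => by simp [mulVec, dotProduct, hP1 a]
  obtain ⟨hrev, -⟩ := obsProdD_mem_reversalPairs P E hP hstat hE r s n
  rw [dotProduct_mulVec] at hrev
  exact hrev

/-- If two rows of the state-dependent probability matrix are equal,
then the observed process of the discrete-time three-state hidden Markov model is
reversible. -/
theorem observed_reversible_of_two_rows_eq_discrete
    (P : Matrix (Fin 3) (Fin 3) ℝ) (μ : Fin 3 → ℝ)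
    {K : ℕ} (E : Matrix (Fin 3) (Fin K) ℝ)
    (hP0 : ∀ i j : Fin 3, 0 ≤ P i j)
    (hP1 : ∀ i : Fin 3, ∑ j, P i j = 1)
    (hpos : ∀ i, 0 < μ i) (hsum : μ 0 + μ 1 + μ 2 = 1)
    (hstat : μ ᵥ* P = μ)
    (hE0 : ∀ a k, 0 ≤ E a k) (hE1 : ∀ a : Fin 3, ∑ k, E a k = 1)
    (hsing : ∃ i j : Fin 3, i ≠ j ∧ (fun k => E i k) = (fun k => E j k)) :
    ∀ (r : ℕ) (s : Fin (r + 1) → Fin K) (n : Fin r → ℕ), (∀ i, 1 ≤ n i) →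
      (μ ᵥ* obsProdD P E s n) ⬝ᵥ (fun _ => (1 : ℝ)) =
        (μ ᵥ* obsProdD P E (s ∘ Fin.rev) (n ∘ Fin.rev)) ⬝ᵥ (fun _ => (1 : ℝ)) :=
  observed_reversible_of_two_rows_eq_discrete_general P μ E hP1 hstat hsing
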